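/- Suppose A = dom(F) for a partially computable F, A has density 1, and A has no computable subset of density 1. Let V be universal and define U(x) = V(y) if x = y² and U(x) = F(x) otherwise. Then U is universal, dom(U) has density 1, and dom(U) is not almost decidable. -/

import Mathlib

open Filter

/-- The counting sequence #({1,...,N} ∩ A)/N used for natural density. -/
noncomputable def densSeq (A : Set ℕ) (N : ℕ) : ℝ :=
  (Nat.card ↥(A ∩ Set.Icc 1 N) : ℝ) / N

/-- `A` has natural density `r`. -/
def HasDensity (A : Set ℕ) (r : ℝ) : Prop :=
  Filter.Tendsto (densSeq A) Filter.atTop (nhds r)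

/-- `phi n` is the largest `k` such that `2^(k-1)` divides `n` (for `n ≥ 1`),
i.e. the 2-adic valuation of `n` plus one. -/
def phi (n : ℕ) : ℕ := padicValNat 2 n + 1

/-- A set of positive integers is almost decidable if some computable set of
natural density one intersects it in a computable set. -/
def AlmostDecidable (S : Set ℕ) : Prop :=
  ∃ R : Set ℕ, ComputablePred (· ∈ R) ∧ HasDensity R 1 ∧
    ComputablePred (fun x => x ∈ R ∧ x ∈ S)

/-- A (Turing) universal partially computable unary function. -/
def Universal (U : ℕ →. ℕ) : Prop :=
  Partrec U ∧ ∃ C : ℕ → ℕ → ℕ, Computable₂ C ∧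
    ∀ F : ℕ →. ℕ, Partrec F → ∃ g : ℕ, ∀ x, 1 ≤ x → U (C g x) = F x


/-!
Squares have density zero, so changing `U` on the squares does not affect density statements:
`dom U` agrees with `A = dom F` off the squares, and hence has density one. On the squares `U`
copies the universal `V` (`U (n * n) = V n`), which makes `U` universal. If a computable `R` of
density one had `R ∩ dom U` computable, then removing the (computable, density zero) squares from
`R ∩ dom U` would give a computable subset of `A` of density one.
-/

def squares : Set ℕ := {x | Nat.sqrt x * Nat.sqrt x = x}

instance : DecidablePred (· ∈ squares) := fun x => decEq (Nat.sqrt x * Nat.sqrt x) x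

lemma mul_self_mem_squares (n : ℕ) : n * n ∈ squares := by
  simp [squares, Nat.sqrt_eq]

lemma computablePred_mem_squares : ComputablePred (· ∈ squares) :=
  PrimrecPred.computablePred <|
    Primrec.eq.comp (Primrec.nat_mul.comp Primrec.nat_sqrt Primrec.nat_sqrt) Primrec.id

protected lemma ComputablePred.and {α : Type*} [Primcodable α] {p q : α → Prop} :
    ComputablePred p → ComputablePred q → ComputablePred fun a => p a ∧ q a
  | ⟨_, hp⟩, ⟨_, hq⟩ =>
    Computable.computablePred <| (Primrec.and.to_comp.comp hp hq).of_eq fun _ => by simp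

lemma densSeq_eq_ncard (A : Set ℕ) (N : ℕ) :
    densSeq A N = ((A ∩ Set.Icc 1 N).ncard : ℝ) / N := by
  rw [densSeq, Nat.card_coe_set_eq]

lemma densSeq_nonneg (A : Set ℕ) (N : ℕ) : 0 ≤ densSeq A N := by
  unfold densSeq; positivity

lemma densSeq_le_one (A : Set ℕ) (N : ℕ) : densSeq A N ≤ 1 := by
  rw [densSeq_eq_ncard]
  apply div_le_one_of_le₀ _ (Nat.cast_nonneg N)
  calc ((A ∩ Set.Icc 1 N).ncard : ℝ) ≤ (Set.Icc 1 N).ncard := by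
        exact_mod_cast Set.ncard_le_ncard Set.inter_subset_right (Set.finite_Icc 1 N)
    _ = N := by simp [← Finset.coe_Icc, Set.ncard_coe_finset]

lemma densSeq_le_add_of_subset_union {A B S : Set ℕ} (h : A ⊆ B ∪ S) (N : ℕ) :
    densSeq A N ≤ densSeq B N + densSeq S N := by
  simp only [densSeq_eq_ncard, ← add_div]
  gcongr
  calc ((A ∩ Set.Icc 1 N).ncard : ℝ)
      ≤ ((B ∩ Set.Icc 1 N) ∪ (S ∩ Set.Icc 1 N)).ncard := by
        rw [← Set.union_inter_distrib_right]
        exact_mod_cast Set.ncard_le_ncard (Set.inter_subset_inter_left _ h)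
          ((Set.finite_Icc 1 N).inter_of_right _)
    _ ≤ _ := by exact_mod_cast Set.ncard_union_le _ _

lemma densSeq_add_le_densSeq_inter (A B : Set ℕ) (N : ℕ) :
    densSeq A N + densSeq B N ≤ densSeq (A ∩ B) N + 1 := by
  have hcount := Set.ncard_union_add_ncard_inter (A ∩ Set.Icc 1 N) (B ∩ Set.Icc 1 N)
    ((Set.finite_Icc 1 N).inter_of_right _) ((Set.finite_Icc 1 N).inter_of_right _)
  rw [← Set.union_inter_distrib_right, ← Set.inter_inter_distrib_right] at hcount
  have hunion := densSeq_le_one (A ∪ B) N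
  simp only [densSeq_eq_ncard, ← add_div] at hunion ⊢
  have : ((A ∩ Set.Icc 1 N).ncard : ℝ) + (B ∩ Set.Icc 1 N).ncard
      = ((A ∪ B) ∩ Set.Icc 1 N).ncard + ((A ∩ B) ∩ Set.Icc 1 N).ncard := by
    exact_mod_cast hcount.symm
  rw [this, add_div]
  linarith

lemma HasDensity.of_subset_union {A B S : Set ℕ} {r : ℝ} (hA : HasDensity A r)
    (hS : HasDensity S 0) (hAB : A ⊆ B ∪ S) (hBA : B ⊆ A ∪ S) : HasDensity B r := by
  have hlower : Tendsto (fun N => densSeq A N - densSeq S N) atTop (nhds r) := by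
    simpa using hA.sub hS
  have hupper : Tendsto (fun N => densSeq A N + densSeq S N) atTop (nhds r) := by
    simpa using hA.add hS
  refine tendsto_of_tendsto_of_tendsto_of_le_of_le hlower hupper (fun N => ?_)
    (densSeq_le_add_of_subset_union hBA)
  linarith [densSeq_le_add_of_subset_union hAB N]

lemma HasDensity.inter_of_one {A B : Set ℕ} (hA : HasDensity A 1) (hB : HasDensity B 1) :
    HasDensity (A ∩ B) 1 := by
  have hlower : Tendsto (fun N => densSeq A N + densSeq B N - 1) atTop (nhds 1) := by
    simpa using (hA.add hB).sub_const 1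
  refine tendsto_of_tendsto_of_tendsto_of_le_of_le hlower tendsto_const_nhds
    (fun N => ?_) (densSeq_le_one _)
  linarith [densSeq_add_le_densSeq_inter A B N]

lemma ncard_squares_inter_Icc_le (N : ℕ) :
    (squares ∩ Set.Icc 1 N).ncard ≤ Nat.sqrt N := by
  calc (squares ∩ Set.Icc 1 N).ncard ≤ (Set.Icc 1 (Nat.sqrt N)).ncard := by
        refine Set.ncard_le_ncard_of_injOn Nat.sqrt ?_ ?_ (Set.finite_Icc _ _)
        · rintro x ⟨hx, hx1, hxN⟩
          refine ⟨Nat.pos_of_ne_zero fun h0 => ?_, Nat.sqrt_le_sqrt hxN⟩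
          have : x = 0 := by rw [← hx.out, h0]
          omega
        · intro x hx y hy hxy
          rw [← hx.1.out, ← hy.1.out, hxy]
    _ = Nat.sqrt N := by simp [← Finset.coe_Icc, Set.ncard_coe_finset]

lemma tendsto_sqrt_div_self : Tendsto (fun N : ℕ => (Nat.sqrt N : ℝ) / N) atTop (nhds 0) := by
  have hsqrt : Tendsto Nat.sqrt atTop atTop :=
    tendsto_atTop_atTop.2 fun b => ⟨b * b, fun n hn => by
      simpa [Nat.sqrt_eq] using Nat.sqrt_le_sqrt hn⟩
  refine squeeze_zero (fun N => by positivity) (fun N => ?_)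
    (tendsto_inv_atTop_zero.comp (tendsto_natCast_atTop_atTop.comp hsqrt))
  rcases Nat.eq_zero_or_pos (Nat.sqrt N) with h0 | hpos
  · simp [h0]
  have hpos' : (0 : ℝ) < Nat.sqrt N := by exact_mod_cast hpos
  calc (Nat.sqrt N : ℝ) / N ≤ Nat.sqrt N / (Nat.sqrt N * Nat.sqrt N) := by
        gcongr
        exact_mod_cast Nat.sqrt_le N
    _ = (Nat.sqrt N : ℝ)⁻¹ := by field_simp

lemma hasDensity_squares : HasDensity squares 0 := by
  refine squeeze_zero (densSeq_nonneg _) (fun N => ?_) tendsto_sqrt_div_self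
  rw [densSeq_eq_ncard]
  gcongr
  exact_mod_cast ncard_squares_inter_Icc_le N

lemma HasDensity.of_eq_off_squares {A B : Set ℕ} {r : ℝ} (hA : HasDensity A r)
    (h : ∀ x ∉ squares, x ∈ A ↔ x ∈ B) : HasDensity B r := by
  refine hA.of_subset_union hasDensity_squares (fun x hx => ?_) (fun x hx => ?_) <;>
    by_cases hx' : x ∈ squares <;> simp_all

lemma Universal.of_comp {U V : ℕ →. ℕ} (hV : Universal V) (hU : Partrec U) {e : ℕ → ℕ}
    (he : Computable e) (hUV : ∀ n, U (e n) = V n) : Universal U := by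
  obtain ⟨-, C, hC, hCV⟩ := hV
  refine ⟨hU, fun g x => e (C g x), he.comp₂ hC, fun F hF => ?_⟩
  obtain ⟨g, hg⟩ := hCV F hF
  exact ⟨g, fun x hx => (hUV _).trans (hg x hx)⟩

theorem stmt_12 (F : ℕ →. ℕ) (hF : Partrec F)
    (A : Set ℕ) (hA : A = {x : ℕ | 1 ≤ x ∧ (F x).Dom})
    (hAdens : HasDensity A 1)
    (hAnosub : ¬ ∃ R : Set ℕ, ComputablePred (· ∈ R) ∧ HasDensity R 1 ∧ R ⊆ A)
    (V : ℕ →. ℕ) (hV : Universal V) (U : ℕ →. ℕ)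
    (hU : ∀ x : ℕ, U x =
      if Nat.sqrt x * Nat.sqrt x = x then V (Nat.sqrt x) else F x) :
    Universal U ∧ HasDensity {x : ℕ | 1 ≤ x ∧ (U x).Dom} 1 ∧
    ¬ AlmostDecidable {x : ℕ | (U x).Dom} := by
  have hUpart : Partrec U :=
    (Partrec.cond computablePred_mem_squares.decide (hV.1.comp Primrec.nat_sqrt.to_comp) hF).of_eq
      fun x => by by_cases h : x ∈ squares <;> simp_all [squares]
  have hUsq (n : ℕ) : U (n * n) = V n := by simp [hU, Nat.sqrt_eq]
  have hUF : ∀ x ∉ squares, U x = F x := fun x hx => (hU x).trans (if_neg hx)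
  have hpos : ∀ x ∉ squares, 1 ≤ x := fun x hx =>
    Nat.one_le_iff_ne_zero.2 fun h => hx (h ▸ mul_self_mem_squares 0)
  have hdom : HasDensity {x | (U x).Dom} 1 :=
    hAdens.of_eq_off_squares fun x hx => by simp [hA, hUF x hx, hpos x hx]
  refine ⟨hV.of_comp hUpart (Primrec.nat_mul.comp Primrec.id Primrec.id).to_comp hUsq,
    hAdens.of_eq_off_squares fun x hx => by simp [hA, hUF x hx], ?_⟩
  rintro ⟨R, -, hRdens, hRdom⟩
  refine hAnosub ⟨{x | (x ∈ R ∧ (U x).Dom) ∧ x ∉ squares},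
    hRdom.and computablePred_mem_squares.not, ?_, fun x ⟨⟨_, hxU⟩, hx⟩ => ?_⟩
  · exact (hRdens.inter_of_one hdom).of_eq_off_squares fun x hx => by simp [hx]
  · simpa [hA, hpos x hx, ← hUF x hx] using hxU
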